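/- Let G be a finite simple graph and let K_q be the complete graph on q vertices. Then the star b-chromatic number of the join satisfies S_b(G ∨ K_q) = S_b(G) + q. -/

import Mathlib

/-!
Definitions for star colorings, star recoloring steps, the strict partial order `≺ₛ`,
star b-vertices, the star (b-)chromatic number, star degrees and related notions,
following Božović, Mesarič Štesl, Peterin,
"On star b-chromatic number of a graph".
-/

variable {V : Type*}

/-- A proper coloring which is a *star coloring*: no path on four vertices
(vertices `a-b-x-y` with the three edges `ab`, `bx`, `xy`) is bicolored,
i.e. the union of any two color classes induces a star forest. -/
def IsStarColoring (G : SimpleGraph V) (c : V → ℕ) : Prop :=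
  (∀ ⦃u w⦄, G.Adj u w → c u ≠ c w) ∧
  ∀ a b x y : V, G.Adj a b → G.Adj b x → G.Adj x y →
    a ≠ x → b ≠ y → a ≠ y → ¬(c a = c x ∧ c b = c y)

/-- The set of colors used by a coloring. -/
def colorsUsed [Fintype V] (c : V → ℕ) : Finset ℕ :=
  Finset.image c Finset.univ

/-- `c'` is obtained from `c` by a *star recoloring step*: some color class `Vᵢ`
of the star coloring `c` is completely recolored, each of its vertices receiving one
of the remaining colors of `c`, so that the result `c'` is again a star coloring
(using the colors of `c` minus `i`). We write `c' ⊲ₛ c`. -/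
def StarRecolorStep [Fintype V] (G : SimpleGraph V) (c' c : V → ℕ) : Prop :=
  IsStarColoring G c ∧ IsStarColoring G c' ∧
  ∃ i ∈ colorsUsed c,
    (∀ v, c v ≠ i → c' v = c v) ∧
    ∀ v, c v = i → c' v ≠ i ∧ c' v ∈ colorsUsed c

/-- A minimal element of the strict partial order `≺ₛ` (the transitive closure of
the star recoloring step relation `⊲ₛ`): a star coloring on which no star
recoloring step can be performed. -/
def IsStarBColoring [Fintype V] (G : SimpleGraph V) (c : V → ℕ) : Prop :=
  IsStarColoring G c ∧ ∀ c', ¬ StarRecolorStep G c' c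

/-- The *star b-chromatic number* `Sᵦ(G)`: the maximum number of colors used by a
minimal element of `≺ₛ`. -/
noncomputable def starBChromaticNumber [Fintype V] (G : SimpleGraph V) : ℕ :=
  sSup {n | ∃ c : V → ℕ, IsStarBColoring G c ∧ (colorsUsed c).card = n}

/-- The *star chromatic number* `S(G)`: the minimum number of colors in a star coloring. -/
noncomputable def starChromaticNumber [Fintype V] (G : SimpleGraph V) : ℕ :=
  sInf {n | ∃ c : V → ℕ, IsStarColoring G c ∧ (colorsUsed c).card = n}

/-- A color `j` is *blocked* for the vertex `v` under the star coloring `c`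
if `j` is the color of `v` itself, or recoloring `v` alone with `j` destroys
the star coloring property. -/
def ColorBlockedFor [DecidableEq V] (G : SimpleGraph V) (c : V → ℕ) (v : V) (j : ℕ) : Prop :=
  j = c v ∨ ¬ IsStarColoring G (Function.update c v j)

/-- A color of `c` which is not blocked for `v` is *available* for `v`. -/
def ColorAvailableFor [Fintype V] [DecidableEq V] (G : SimpleGraph V) (c : V → ℕ)
    (v : V) (j : ℕ) : Prop :=
  j ∈ colorsUsed c ∧ ¬ ColorBlockedFor G c v j

/-- `u-b-x-w` is an induced path on four vertices of `G`. -/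
def IsInducedP4 (G : SimpleGraph V) (u b x w : V) : Prop :=
  G.Adj u b ∧ G.Adj b x ∧ G.Adj x w ∧
  ¬ G.Adj u x ∧ ¬ G.Adj b w ∧ ¬ G.Adj u w ∧
  u ≠ x ∧ b ≠ w ∧ u ≠ w

/-- The relation `~ᵢ` on a color class: two vertices of the same color joined
by an induced path on four vertices. -/
def P4Rel (G : SimpleGraph V) (c : V → ℕ) (u w : V) : Prop :=
  c u = c w ∧ ∃ b x, IsInducedP4 G u b x w

/-- The `P₄`-system of `v`: its equivalence class under the
reflexive-transitive closure of `~ᵢ`. -/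
def P4System (G : SimpleGraph V) (c : V → ℕ) (v : V) : Set V :=
  {u | Relation.ReflTransGen (P4Rel G c) v u}

/-- An available color `j` for `v` is *blocked for the `P₄`-system of `v`* if every
recoloring of the color class of `v` (each vertex receiving an available color)
in which `v` is recolored by `j` yields a bicolored path on four vertices between
two vertices of the `P₄`-system of `v`. -/
def BlockedForP4System [Fintype V] [DecidableEq V] (G : SimpleGraph V) (c : V → ℕ)
    (v : V) (j : ℕ) : Prop :=
  ∀ c' : V → ℕ,
    (∀ u, c u ≠ c v → c' u = c u) →
    (∀ u, c u = c v → ColorAvailableFor G c u (c' u)) →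
    c' v = j →
    ∃ u w b x, u ∈ P4System G c v ∧ w ∈ P4System G c v ∧
      G.Adj u b ∧ G.Adj b x ∧ G.Adj x w ∧ u ≠ x ∧ b ≠ w ∧ u ≠ w ∧
      c' u = c' x ∧ c' b = c' w

/-- A *star b-vertex*: every available color for `v` is blocked for its `P₄`-system. -/
def IsStarBVertex [Fintype V] [DecidableEq V] (G : SimpleGraph V) (c : V → ℕ) (v : V) : Prop :=
  ∀ j, ColorAvailableFor G c v j → BlockedForP4System G c v j

/-- The *star degree* `dˢ_G(v)` of a vertex: the maximum number of colors blocked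
for `v` over all star colorings of `G`. -/
noncomputable def starDegree [Fintype V] [DecidableEq V] (G : SimpleGraph V) (v : V) : ℕ :=
  sSup {n | ∃ c : V → ℕ, IsStarColoring G c ∧
    {j | j ∈ colorsUsed c ∧ ColorBlockedFor G c v j}.ncard = n}

/-- The `mₛ`-degree of a graph: the largest `k` such that `G` has `k` vertices
of star degree at least `k - 1` (equivalently, with the vertices ordered by
non-increasing star degree, `mₛ(G) = max {i : i - 1 ≤ dˢ_G(vᵢ)}`). -/
noncomputable def msDegree [Fintype V] [DecidableEq V] (G : SimpleGraph V) : ℕ :=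
  sSup {k | ∃ s : Finset V, s.card = k ∧ ∀ v ∈ s, k - 1 ≤ starDegree G v}

/-- The maximum degree `Δ(G)` of a graph. -/
noncomputable def maxDeg (G : SimpleGraph V) : ℕ :=
  sSup {d | ∃ v : V, (G.neighborSet v).ncard = d}

/-- The *b-chromatic number* `φ(G)`: the maximum number of colors of a proper coloring
in which every color class contains a vertex whose closed neighborhood contains
all the colors. -/
noncomputable def bChromaticNumber [Fintype V] (G : SimpleGraph V) : ℕ :=
  sSup {k | ∃ c : V → ℕ, (∀ ⦃u w⦄, G.Adj u w → c u ≠ c w) ∧ (colorsUsed c).card = k ∧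
    ∀ i ∈ colorsUsed c, ∃ v, c v = i ∧
      ∀ j ∈ colorsUsed c, ∃ u, (u = v ∨ G.Adj v u) ∧ c u = j}

/-- The join `G ∨ H` of two simple graphs: disjoint union of `G` and `H`
together with all edges between the two vertex sets. -/
def graphJoin {α β : Type*} (G : SimpleGraph α) (H : SimpleGraph β) :
    SimpleGraph (α ⊕ β) where
  Adj x y :=
    (∃ a b, x = Sum.inl a ∧ y = Sum.inl b ∧ G.Adj a b) ∨
    (∃ a b, x = Sum.inr a ∧ y = Sum.inr b ∧ H.Adj a b) ∨
    (∃ a b, x = Sum.inl a ∧ y = Sum.inr b) ∨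
    (∃ a b, x = Sum.inr a ∧ y = Sum.inl b)
  symm := by
    constructor
    rintro x y (⟨a,b,rfl,rfl,h⟩|⟨a,b,rfl,rfl,h⟩|⟨a,b,rfl,rfl⟩|⟨a,b,rfl,rfl⟩)
    · exact Or.inl ⟨b, a, rfl, rfl, h.symm⟩
    · exact Or.inr (Or.inl ⟨b, a, rfl, rfl, h.symm⟩)
    · exact Or.inr (Or.inr (Or.inr ⟨b, a, rfl, rfl⟩))
    · exact Or.inr (Or.inr (Or.inl ⟨b, a, rfl, rfl⟩))
  loopless := by
    constructor
    rintro x (⟨a,b,h1,h2,h⟩|⟨a,b,h1,h2,h⟩|⟨a,b,h1,h2⟩|⟨a,b,h1,h2⟩) <;> subst h1 <;>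
      simp_all [SimpleGraph.irrefl]

/-- `N₂(v)`: vertices at distance exactly two from `v`. -/
def distTwoSet (G : SimpleGraph V) (v : V) : Set V := {u | G.dist v u = 2}

/-- `N₃(v)`: vertices at distance exactly three from `v`. -/
def distThreeSet (G : SimpleGraph V) (v : V) : Set V := {u | G.dist v u = 3}

/-- `X(v)`: vertices at distance two from `v` with no neighbor at distance three from `v`. -/
def XSet (G : SimpleGraph V) (v : V) : Set V :=
  {u | u ∈ distTwoSet G v ∧ ∀ w ∈ distThreeSet G v, ¬ G.Adj u w}

/-- `Y(v)`: vertices at distance two from `v` having a neighbor at distance three from `v`. -/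
def YSet (G : SimpleGraph V) (v : V) : Set V := distTwoSet G v \ XSet G v

/-!
A star b-coloring of `G ∨ K_q` gives the `q` universal vertices `q` distinct colors that appear
nowhere in `G`, so it is a star b-coloring of `G` together with `q` private colors: a recoloring
step on `G` would extend, unchanged on `K_q`, to one on the join. Conversely, adding `q` fresh
colors on `K_q` to a star b-coloring of `G` gives a star b-coloring of the join: a fresh color
class is a single universal vertex, which has no other color to move to, and a vertex of `G`
cannot move to a fresh color, which its universal neighbour keeps.
-/

open Finset

section StarColoring

variable {α β : Type*}

theorem mem_colorsUsed [Fintype V] {c : V → ℕ} {j : ℕ} :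
    j ∈ colorsUsed c ↔ ∃ v, c v = j := by
  simp [colorsUsed]

theorem card_colorsUsed_of_injective [Fintype V] {c : V → ℕ} (hc : Function.Injective c) :
    (colorsUsed c).card = Fintype.card V :=
  card_image_of_injective _ hc

theorem card_colorsUsed_le [Fintype V] (c : V → ℕ) : (colorsUsed c).card ≤ Fintype.card V :=
  card_image_le

theorem colorsUsed_sumElim [Fintype α] [Fintype β] (c : α → ℕ) (d : β → ℕ) :
    colorsUsed (Sum.elim c d) = colorsUsed c ∪ colorsUsed d := by
  ext j
  simp only [mem_colorsUsed, mem_union, Sum.exists, Sum.elim_inl, Sum.elim_inr]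

theorem disjoint_colorsUsed_iff [Fintype α] [Fintype β] {c : α → ℕ} {d : β → ℕ} :
    Disjoint (colorsUsed c) (colorsUsed d) ↔ ∀ a b, c a ≠ d b := by
  simp only [disjoint_left, mem_colorsUsed]
  grind

theorem card_colorsUsed_sumElim [Fintype α] [Fintype β] {c : α → ℕ} {d : β → ℕ}
    (h : Disjoint (colorsUsed c) (colorsUsed d)) :
    (colorsUsed (Sum.elim c d)).card = (colorsUsed c).card + (colorsUsed d).card := by
  rw [colorsUsed_sumElim, card_union_of_disjoint h]

theorem exists_injective_disjoint_colorsUsed (s : Finset ℕ) (β : Type*) [Fintype β] :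
    ∃ d : β → ℕ, Function.Injective d ∧ Disjoint s (colorsUsed d) := by
  refine ⟨fun b => s.sup id + 1 + Fintype.equivFin β b, fun b b' h => ?_, ?_⟩
  · exact (Fintype.equivFin β).injective (Fin.ext (by simpa using h))
  · rw [disjoint_left]
    rintro j hj hd
    have hj_le : j ≤ s.sup id := le_sup (f := id) hj
    obtain ⟨b, rfl⟩ := mem_colorsUsed.mp hd
    omega

theorem isStarColoring_of_injective {G : SimpleGraph V} {c : V → ℕ}
    (hc : Function.Injective c) : IsStarColoring G c :=
  ⟨fun _ _ h => hc.ne (G.ne_of_adj h), fun _ _ _ _ _ _ _ hax _ _ h => hax (hc h.1)⟩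

theorem IsStarColoring.comp_hom {G : SimpleGraph α} {G' : SimpleGraph β} {c : β → ℕ}
    (hc : IsStarColoring G' c) (f : G →g G') (hf : Function.Injective f) :
    IsStarColoring G (c ∘ f) :=
  ⟨fun _ _ h => hc.1 (f.map_adj h), fun _ _ _ _ hab hbx hxy hax hby hay =>
    hc.2 _ _ _ _ (f.map_adj hab) (f.map_adj hbx) (f.map_adj hxy) (hf.ne hax) (hf.ne hby)
      (hf.ne hay)⟩

theorem StarRecolorStep.colorsUsed_ssubset [Fintype V] {G : SimpleGraph V} {c' c : V → ℕ}
    (h : StarRecolorStep G c' c) : colorsUsed c' ⊂ colorsUsed c := by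
  obtain ⟨-, -, i, hi, hkeep, hrec⟩ := h
  refine _root_.ssubset_of_subset_of_ssubset (fun j hj => ?_) (erase_ssubset hi)
  obtain ⟨v, rfl⟩ := mem_colorsUsed.mp hj
  by_cases hv : c v = i
  · exact mem_erase.2 (hrec v hv)
  · rw [hkeep v hv]
    exact mem_erase.2 ⟨hv, mem_colorsUsed.2 ⟨v, rfl⟩⟩

end StarColoring

section StarBChromaticNumber

variable [Fintype V] (G : SimpleGraph V)

/-- A star coloring with the fewest colors admits no recoloring step. -/
theorem exists_isStarBColoring : ∃ c : V → ℕ, IsStarBColoring G c := by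
  obtain ⟨c, hc, hmin⟩ := (measure fun c : V → ℕ => (colorsUsed c).card).wf.has_min
    {c | IsStarColoring G c}
    ⟨_, isStarColoring_of_injective (Fin.val_injective.comp (Fintype.equivFin V).injective)⟩
  exact ⟨c, hc, fun c' h => hmin c' h.2.1 (card_lt_card h.colorsUsed_ssubset)⟩

theorem bddAbove_card_colorsUsed_starBColorings :
    BddAbove {n | ∃ c : V → ℕ, IsStarBColoring G c ∧ (colorsUsed c).card = n} :=
  ⟨Fintype.card V, by rintro _ ⟨c, -, rfl⟩; exact card_colorsUsed_le c⟩

variable {G}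

theorem IsStarBColoring.card_colorsUsed_le {c : V → ℕ} (hc : IsStarBColoring G c) :
    (colorsUsed c).card ≤ starBChromaticNumber G :=
  le_csSup (bddAbove_card_colorsUsed_starBColorings G) ⟨c, hc, rfl⟩

variable (G)

theorem exists_isStarBColoring_card_eq :
    ∃ c : V → ℕ, IsStarBColoring G c ∧ (colorsUsed c).card = starBChromaticNumber G := by
  obtain ⟨c, hc⟩ := exists_isStarBColoring G
  refine Nat.sSup_mem ?_ (bddAbove_card_colorsUsed_starBColorings G)
  exact ⟨_, c, hc, rfl⟩

end StarBChromaticNumber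

section GraphJoin

variable {α β : Type*} {G : SimpleGraph α} {H : SimpleGraph β}

@[simp]
theorem graphJoin_adj_inl_inl {a a' : α} :
    (graphJoin G H).Adj (Sum.inl a) (Sum.inl a') ↔ G.Adj a a' := by
  simp [graphJoin]

@[simp]
theorem graphJoin_adj_inr_inr {b b' : β} :
    (graphJoin G H).Adj (Sum.inr b) (Sum.inr b') ↔ H.Adj b b' := by
  simp [graphJoin]

@[simp]
theorem graphJoin_adj_inl_inr (a : α) (b : β) : (graphJoin G H).Adj (Sum.inl a) (Sum.inr b) := by
  simp [graphJoin]

@[simp]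
theorem graphJoin_adj_inr_inl (b : β) (a : α) : (graphJoin G H).Adj (Sum.inr b) (Sum.inl a) := by
  simp [graphJoin]

theorem graphJoin_top_adj_inr {b : β} {w : α ⊕ β} :
    (graphJoin G (⊤ : SimpleGraph β)).Adj (Sum.inr b) w ↔ w ≠ Sum.inr b := by
  rcases w with a | b' <;> simp [eq_comm]

variable {c : α → ℕ} {d : β → ℕ}

theorem IsStarColoring.comp_inl {c : α ⊕ β → ℕ} (hc : IsStarColoring (graphJoin G H) c) :
    IsStarColoring G (c ∘ Sum.inl) :=
  hc.comp_hom ⟨Sum.inl, graphJoin_adj_inl_inl.2⟩ Sum.inl_injective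

theorem IsStarColoring.sumElim_ne (hc : IsStarColoring (graphJoin G H) (Sum.elim c d))
    (a : α) (b : β) : c a ≠ d b :=
  hc.1 (graphJoin_adj_inl_inr a b)

theorem IsStarColoring.injective_inr
    (hc : IsStarColoring (graphJoin G (⊤ : SimpleGraph β)) (Sum.elim c d)) :
    Function.Injective d := fun b b' h => by
  by_contra hne
  exact hc.1 (graphJoin_adj_inr_inr.2 hne) h

/-- Two equally colored vertices of `G ∨ H` both lie in `G`, so a bicolored path lies in `G`. -/
theorem IsStarColoring.sumElim_join (hc : IsStarColoring G c) (hd : Function.Injective d)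
    (hdisj : ∀ a b, c a ≠ d b) : IsStarColoring (graphJoin G H) (Sum.elim c d) := by
  have inl_of_eq : ∀ u w : α ⊕ β, Sum.elim c d u = Sum.elim c d w → u ≠ w →
      ∃ a a', u = Sum.inl a ∧ w = Sum.inl a' := by
    rintro (a | b) (a' | b') h hne
    · exact ⟨a, a', rfl, rfl⟩
    · exact absurd h (hdisj a b')
    · exact absurd h.symm (hdisj a' b)
    · exact absurd (congrArg Sum.inr (hd h)) hne
  refine ⟨?_, fun u v w x huv hvw hwx huw hvx hux ⟨hcuw, hcvx⟩ => ?_⟩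
  · rintro (a | b) (a' | b') h
    · exact hc.1 (graphJoin_adj_inl_inl.1 h)
    · exact hdisj a b'
    · exact (hdisj a' b).symm
    · exact hd.ne (graphJoin_adj_inr_inr.1 h).ne
  · obtain ⟨a, a', rfl, rfl⟩ := inl_of_eq u w hcuw huw
    obtain ⟨b, b', rfl, rfl⟩ := inl_of_eq v x hcvx hvx
    simp only [graphJoin_adj_inl_inl, ne_eq, Sum.inl.injEq] at huv hvw hwx huw hvx hux
    exact hc.2 a b a' b' huv hvw hwx huw hvx hux ⟨hcuw, hcvx⟩

variable [Fintype α] [Fintype β]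

theorem IsStarBColoring.of_sumElim_join_top
    (hc : IsStarBColoring (graphJoin G (⊤ : SimpleGraph β)) (Sum.elim c d)) :
    IsStarBColoring G c := by
  refine ⟨hc.1.comp_inl, fun c' hstep => hc.2 (Sum.elim c' d) ?_⟩
  have hsub := hstep.colorsUsed_ssubset.subset
  obtain ⟨-, hc', i, hi, hkeep, hrec⟩ := hstep
  have hd_ne : ∀ b, d b ≠ i := by
    obtain ⟨a, rfl⟩ := mem_colorsUsed.mp hi
    exact fun b h => hc.1.sumElim_ne a b h.symm
  refine ⟨hc.1, hc'.sumElim_join hc.1.injective_inr fun a b h => ?_, i, ?_, ?_, ?_⟩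
  · obtain ⟨a', ha'⟩ := mem_colorsUsed.mp (hsub (mem_colorsUsed.2 ⟨a, rfl⟩))
    exact hc.1.sumElim_ne a' b (ha'.trans h)
  · exact colorsUsed_sumElim c d ▸ mem_union_left _ hi
  · rintro (a | b) h
    exacts [hkeep a h, rfl]
  · rintro (a | b) h
    · exact ⟨(hrec a h).1, colorsUsed_sumElim c d ▸ mem_union_left _ (hrec a h).2⟩
    · exact absurd h (hd_ne b)

theorem IsStarBColoring.sumElim_join_top (hc : IsStarBColoring G c) (hd : Function.Injective d)
    (hdisj : Disjoint (colorsUsed c) (colorsUsed d)) :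
    IsStarBColoring (graphJoin G (⊤ : SimpleGraph β)) (Sum.elim c d) := by
  rw [disjoint_colorsUsed_iff] at hdisj
  refine ⟨hc.1.sumElim_join hd hdisj, ?_⟩
  rintro c' ⟨-, hc', i, hi, hkeep, hrec⟩
  have hkept : ∀ v w, Sum.elim c d v = i → Sum.elim c d w ≠ i →
      (graphJoin G (⊤ : SimpleGraph β)).Adj v w → c' v ≠ Sum.elim c d w :=
    fun v w _ hw hvw => hkeep w hw ▸ hc'.1 hvw
  obtain ⟨v, rfl⟩ := mem_colorsUsed.mp hi
  rcases v with a | b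
  · refine hc.2 (c' ∘ Sum.inl) ⟨hc.1, hc'.comp_inl, c a, mem_colorsUsed.2 ⟨a, rfl⟩,
      fun u hu => hkeep (.inl u) hu, fun u hu => ⟨(hrec (.inl u) hu).1, ?_⟩⟩
    obtain ⟨w, hw⟩ := mem_colorsUsed.mp (hrec (.inl u) hu).2
    rcases w with a' | b'
    · exact mem_colorsUsed.2 ⟨a', hw⟩
    · exact absurd hw.symm (hkept _ _ hu (hdisj a b').symm (graphJoin_adj_inl_inr u b'))
  · obtain ⟨hne_i, hmem⟩ := hrec (.inr b) rfl
    obtain ⟨w, hw⟩ := mem_colorsUsed.mp hmem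
    have hwb : Sum.elim c d w ≠ d b := fun h => hne_i (hw.symm.trans h)
    exact hkept _ _ rfl hwb (graphJoin_top_adj_inr.2 (by rintro rfl; exact hwb rfl)) hw.symm

end GraphJoin

/-- **Theorem (join with a complete graph).** For every finite simple graph `G` and the
complete graph `K_q` on `q` vertices, `Sᵦ(G ∨ K_q) = Sᵦ(G) + q`. -/
theorem starBChromaticNumber_join_complete {α : Type*} [Fintype α]
    (G : SimpleGraph α) (q : ℕ) :
    starBChromaticNumber (graphJoin G (⊤ : SimpleGraph (Fin q))) =
      starBChromaticNumber G + q := by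
  apply le_antisymm
  · obtain ⟨c, hc, hcard⟩ :=
      exists_isStarBColoring_card_eq (graphJoin G (⊤ : SimpleGraph (Fin q)))
    obtain ⟨c₁, c₂, rfl⟩ : ∃ c₁ c₂, c = Sum.elim c₁ c₂ :=
      ⟨_, _, (Sum.elim_comp_inl_inr c).symm⟩
    rw [← hcard, card_colorsUsed_sumElim (disjoint_colorsUsed_iff.2 hc.1.sumElim_ne),
      card_colorsUsed_of_injective hc.1.injective_inr, Fintype.card_fin]
    exact Nat.add_le_add_right hc.of_sumElim_join_top.card_colorsUsed_le q
  · obtain ⟨c, hc, hcard⟩ := exists_isStarBColoring_card_eq G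
    obtain ⟨d, hd, hdisj⟩ := exists_injective_disjoint_colorsUsed (colorsUsed c) (Fin q)
    calc starBChromaticNumber G + q = (colorsUsed (Sum.elim c d)).card := by
          rw [card_colorsUsed_sumElim hdisj, card_colorsUsed_of_injective hd, hcard,
            Fintype.card_fin]
      _ ≤ _ := (hc.sumElim_join_top hd hdisj).card_colorsUsed_le
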